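/- arXiv:1910.05394 — 5 statements merged into one kernel-verified Lean document; each statement's English description precedes it below -/
import Mathlib

section
/- For λ : ℝ → (0,∞) twice differentiable and t fixed, ⟨∂ₜₜ(Q₁(R·something)) evaluated as ∂ₜ²[Q₁(r/λ(t))] at r = Rλ(t), tested against φ₀(R)⟩ in L²(R dR) equals (2/3)·λ''(t)/λ(t). Precisely: ∫₀^∞ (∂ₜ²[Q₁(r/λ(t))])|_{r=Rλ(t)} · φ₀(R) · R dR = (2λ''(t))/(3λ(t)). -/
noncomputable def Q1 (r : ℝ) : ℝ := (1 - r^2) / (1 + r^2)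

noncomputable def phi0 (r : ℝ) : ℝ := r^2 / (1 + r^2)^2

/-! Since `Q1 (1 / x) = -Q1 x`, the profile is `-Q1 (l s / (R * l t))`, whose argument is linear
in `l s`, so the chain rule writes the integrand as `(l' / l) ^ 2 * a R + (l'' / l) * b R` with
rational `a`, `b`. As `phi0 = -R * Q1' R / 4` is the scaling mode, `a = -2 * (R ^ 2 * phi0 ^ 2)'` is
a total derivative and integrates to `0`, while `b = (2 / 3 * (R ^ 2 / (1 + R ^ 2)) ^ 3)'`
integrates to `2 / 3`. -/

open MeasureTheory Filter Set Topology

theorem deriv_deriv_comp_of_hasDerivAt {F F' g : ℝ → ℝ} {t f'' : ℝ}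
    (hF : ∀ x, HasDerivAt F (F' x) x) (hF' : HasDerivAt F' f'' (g t))
    (hg : Differentiable ℝ g) (hg' : DifferentiableAt ℝ (deriv g) t) :
    deriv (deriv fun s => F (g s)) t = f'' * deriv g t ^ 2 + F' (g t) * deriv (deriv g) t := by
  have hd : deriv (fun s => F (g s)) = fun s => F' (g s) * deriv g s :=
    funext fun s => ((hF (g s)).comp s (hg s).hasDerivAt).deriv
  have h2 : HasDerivAt (fun s => F' (g s) * deriv g s)
      (f'' * deriv g t * deriv g t + F' (g t) * deriv (deriv g) t) t :=
    (hF'.comp t (hg t).hasDerivAt).fun_mul hg'.hasDerivAt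
  rw [hd, h2.deriv]
  ring

theorem Q1_inv {x : ℝ} (hx : x ≠ 0) : Q1 x⁻¹ = -Q1 x := by
  unfold Q1
  field_simp
  ring

theorem hasDerivAt_Q1 (x : ℝ) : HasDerivAt Q1 (-4 * x / (1 + x ^ 2) ^ 2) x := by
  have h := ((hasDerivAt_pow 2 x).const_sub 1).fun_div ((hasDerivAt_pow 2 x).const_add 1)
    (by positivity : (1 : ℝ) + x ^ 2 ≠ 0)
  refine h.congr_deriv ?_
  push_cast
  ring

theorem hasDerivAt_deriv_Q1 (x : ℝ) :
    HasDerivAt (fun y => -4 * y / (1 + y ^ 2) ^ 2) ((12 * x ^ 2 - 4) / (1 + x ^ 2) ^ 3) x := by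
  have h := ((hasDerivAt_id' x).const_mul (-4)).fun_div
    (((hasDerivAt_pow 2 x).const_add 1).fun_pow 2)
    (by positivity : ((1 : ℝ) + x ^ 2) ^ 2 ≠ 0)
  refine h.congr_deriv ?_
  field_simp
  ring

theorem deriv_deriv_Q1_rescaled_mul_phi0_mul {l : ℝ → ℝ} {t R : ℝ} (hl : ∀ s, l s ≠ 0)
    (hd1 : Differentiable ℝ l) (hd2 : DifferentiableAt ℝ (deriv l) t) (hR : R ≠ 0) :
    deriv (deriv fun s => Q1 (R * l t / l s)) t * phi0 R * R =
      (deriv l t / l t) ^ 2 * (4 * R ^ 5 * (R ^ 2 - 3) / (1 + R ^ 2) ^ 5)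
        + deriv (deriv l) t / l t * (4 * R ^ 5 / (1 + R ^ 2) ^ 4) := by
  have hc : R * l t ≠ 0 := mul_ne_zero hR (hl t)
  have hsymm : (fun s => Q1 (R * l t / l s)) = fun s => -Q1 (l s / (R * l t)) :=
    funext fun s => by rw [← inv_div, Q1_inv (div_ne_zero (hl s) hc)]
  have hderiv : deriv (fun s => l s / (R * l t)) = fun s => deriv l s / (R * l t) :=
    funext fun s => deriv_div_const _
  rw [hsymm, deriv_deriv_comp_of_hasDerivAt (F := fun x => -Q1 x) (fun x => (hasDerivAt_Q1 x).neg)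
    (hasDerivAt_deriv_Q1 _).neg (hd1.div_const _) (by rw [hderiv]; exact hd2.div_const _),
    hderiv, deriv_div_const]
  unfold phi0
  field_simp [hl t]
  ring

theorem tendsto_inv_one_add_sq_atTop : Tendsto (fun x : ℝ => (1 + x ^ 2)⁻¹) atTop (𝓝 0) :=
  (tendsto_atTop_add_const_left _ 1 (tendsto_pow_atTop two_ne_zero)).inv_tendsto_atTop

theorem tendsto_sq_div_one_add_sq_atTop :
    Tendsto (fun x : ℝ => x ^ 2 / (1 + x ^ 2)) atTop (𝓝 1) := by
  have h := tendsto_inv_one_add_sq_atTop.const_sub 1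
  rw [sub_zero] at h
  refine h.congr fun x => ?_
  field_simp
  ring

theorem hasDerivAt_two_thirds_mul_cube_sq_div_one_add_sq (x : ℝ) :
    HasDerivAt (fun y => 2 / 3 * (y ^ 2 / (1 + y ^ 2)) ^ 3) (4 * x ^ 5 / (1 + x ^ 2) ^ 4) x := by
  have hx : (1 : ℝ) + x ^ 2 ≠ 0 := by positivity
  have h := (((hasDerivAt_pow 2 x).fun_div ((hasDerivAt_pow 2 x).const_add 1) hx).fun_pow 3)
    |>.const_mul (2 / 3)
  refine h.congr_deriv ?_
  norm_num
  field_simp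
  ring

theorem hasDerivAt_phi0 (x : ℝ) : HasDerivAt phi0 (2 * x * (1 - x ^ 2) / (1 + x ^ 2) ^ 3) x := by
  have hx : (1 : ℝ) + x ^ 2 ≠ 0 := by positivity
  have h := (hasDerivAt_pow 2 x).fun_div (((hasDerivAt_pow 2 x).const_add 1).fun_pow 2)
    (pow_ne_zero 2 hx)
  refine h.congr_deriv ?_
  field_simp
  ring

theorem hasDerivAt_neg_two_mul_sq_mul_phi0_sq (x : ℝ) :
    HasDerivAt (fun y => -2 * y ^ 2 * phi0 y ^ 2)
      (4 * x ^ 5 * (x ^ 2 - 3) / (1 + x ^ 2) ^ 5) x := by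
  have hx : (1 : ℝ) + x ^ 2 ≠ 0 := by positivity
  have h := ((hasDerivAt_pow 2 x).const_mul (-2)).fun_mul ((hasDerivAt_phi0 x).fun_pow 2)
  refine h.congr_deriv ?_
  norm_num [phi0]
  field_simp
  ring

theorem tendsto_neg_two_mul_sq_mul_phi0_sq_atTop :
    Tendsto (fun x => -2 * x ^ 2 * phi0 x ^ 2) atTop (𝓝 0) := by
  have h := (tendsto_sq_div_one_add_sq_atTop.pow 3).mul tendsto_inv_one_add_sq_atTop
  have h2 := h.const_mul (-2)
  rw [one_pow, one_mul, mul_zero] at h2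
  refine h2.congr fun x => ?_
  unfold phi0
  field_simp

theorem integrableOn_Ioi_pow_five_div_one_add_sq_pow_four :
    IntegrableOn (fun x : ℝ => 4 * x ^ 5 / (1 + x ^ 2) ^ 4) (Ioi 0) :=
  integrableOn_Ioi_deriv_of_nonneg' (fun x _ => hasDerivAt_two_thirds_mul_cube_sq_div_one_add_sq x)
    (fun x (hx : 0 < x) => by positivity) ((tendsto_sq_div_one_add_sq_atTop.pow 3).const_mul _)

theorem integral_Ioi_pow_five_div_one_add_sq_pow_four :
    ∫ x in Ioi (0 : ℝ), 4 * x ^ 5 / (1 + x ^ 2) ^ 4 = 2 / 3 := by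
  rw [integral_Ioi_of_hasDerivAt_of_tendsto'
    (fun x _ => hasDerivAt_two_thirds_mul_cube_sq_div_one_add_sq x)
    integrableOn_Ioi_pow_five_div_one_add_sq_pow_four
    ((tendsto_sq_div_one_add_sq_atTop.pow 3).const_mul _)]
  norm_num

theorem integrableOn_Ioi_pow_five_mul_sub_three_div_one_add_sq_pow_five :
    IntegrableOn (fun x : ℝ => 4 * x ^ 5 * (x ^ 2 - 3) / (1 + x ^ 2) ^ 5) (Ioi 0) := by
  refine (integrableOn_Ioi_pow_five_div_one_add_sq_pow_four.const_mul 3).mono' ?_ ?_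
  · exact (Continuous.aestronglyMeasurable (by fun_prop (disch := intro x; positivity)))
  · filter_upwards [ae_restrict_mem measurableSet_Ioi] with x (hx : 0 < x)
    have hx2 : (1 : ℝ) + x ^ 2 ≠ 0 := by positivity
    have h3 : 3 * (4 * x ^ 5 / (1 + x ^ 2) ^ 4)
        = 4 * x ^ 5 * (3 * (1 + x ^ 2)) / (1 + x ^ 2) ^ 5 := by
      field_simp
    rw [h3, norm_div, norm_mul, Real.norm_of_nonneg (by positivity : (0 : ℝ) ≤ 4 * x ^ 5),
      Real.norm_of_nonneg (by positivity : (0 : ℝ) ≤ (1 + x ^ 2) ^ 5)]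
    gcongr
    rw [Real.norm_eq_abs, abs_le]
    constructor <;> nlinarith [sq_nonneg x]

theorem integral_Ioi_pow_five_mul_sub_three_div_one_add_sq_pow_five :
    ∫ x in Ioi (0 : ℝ), 4 * x ^ 5 * (x ^ 2 - 3) / (1 + x ^ 2) ^ 5 = 0 := by
  rw [integral_Ioi_of_hasDerivAt_of_tendsto' (fun x _ => hasDerivAt_neg_two_mul_sq_mul_phi0_sq x)
    integrableOn_Ioi_pow_five_mul_sub_three_div_one_add_sq_pow_five
    tendsto_neg_two_mul_sq_mul_phi0_sq_atTop]
  norm_num [phi0]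

theorem soliton_time_derivative_inner_product (l : ℝ → ℝ)
    (hpos : ∀ t, 0 < l t)
    (hd1 : Differentiable ℝ l) (hd2 : Differentiable ℝ (deriv l)) (t : ℝ) :
    ∫ R in Set.Ioi (0:ℝ),
        (deriv (deriv (fun s => Q1 (R * l t / l s))) t) * phi0 R * R
      = 2 * deriv (deriv l) t / (3 * l t) := by
  have hl : ∀ s, l s ≠ 0 := fun s => (hpos s).ne'
  rw [setIntegral_congr_fun measurableSet_Ioi fun R (hR : 0 < R) =>
      deriv_deriv_Q1_rescaled_mul_phi0_mul hl hd1 (hd2 t) hR.ne',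
    integral_add (integrableOn_Ioi_pow_five_mul_sub_three_div_one_add_sq_pow_five.const_mul _)
      (integrableOn_Ioi_pow_five_div_one_add_sq_pow_four.const_mul _),
    integral_const_mul, integral_const_mul,
    integral_Ioi_pow_five_mul_sub_three_div_one_add_sq_pow_five,
    integral_Ioi_pow_five_div_one_add_sq_pow_four]
  field_simp [hl t]
  ring
end

section
/- For all λ, ξ > 0: (24/λ²) ∫₀^∞ R³ J₂(ξRλ)/(1+R²)⁴ dR = (ξ³λ/2) K₁(ξλ), where J₂ is the Bessel function of the first kind of order 2 and K₁ is the modified Bessel function of the second kind of order 1. -/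
open MeasureTheory

noncomputable def besselJ (n : ℕ) (x : ℝ) : ℝ :=
  (1 / Real.pi) * ∫ θ in (0:ℝ)..Real.pi, Real.cos (n * θ - x * Real.sin θ)

noncomputable def besselK1 (x : ℝ) : ℝ :=
  ∫ t in Set.Ioi (0:ℝ), Real.exp (-x * Real.cosh t) * Real.cosh t


/-!
Write `(1 + R²)⁻⁴ = (1/6) ∫₀^∞ s³ e^{-(1+R²)s} ds` and exchange the integrals. With `a = ξλ`, the
inner integral is the Gaussian–Bessel integral `∫₀^∞ R³ e^{-sR²} J₂(aR) dR = a²/(8s³) e^{-a²/(4s)}`,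
obtained by integrating the power series of `J₂` term by term (the series itself comes from
Bessel's integral: the odd part `sin 2θ · sin (x sin θ)` integrates to zero over `[0, π]` and the
even part is expanded into Wallis integrals). What is left is `∫₀^∞ e^{-s - a²/(4s)} ds`, which the
substitution `s = (a/2) eᵗ`, `t ∈ ℝ`, turns into `a ∫₀^∞ e^{-a cosh t} cosh t dt = a K₁(a)`.
-/

open Real Set
open scoped Nat

theorem continuous_besselJ (n : ℕ) : Continuous (besselJ n) :=
  continuous_const.mul <|
    intervalIntegral.continuous_parametric_intervalIntegral_of_continuous' (by fun_prop) 0 π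

theorem abs_besselJ_le_one (n : ℕ) (x : ℝ) : |besselJ n x| ≤ 1 := by
  have h : ‖∫ θ in (0:ℝ)..π, cos (n * θ - x * sin θ)‖ ≤ 1 * |π - 0| :=
    intervalIntegral.norm_integral_le_of_norm_le_const fun θ _ => abs_cos_le_one _
  rw [sub_zero, abs_of_pos pi_pos, one_mul, Real.norm_eq_abs] at h
  rw [besselJ, abs_mul, abs_of_pos (by positivity), one_div_mul_eq_div]
  exact (div_le_one pi_pos).mpr h

theorem integral_sin_pow_two_mul (m : ℕ) :
    ∫ θ in (0:ℝ)..π, sin θ ^ (2 * m) = π * (2 * m)! / (4 ^ m * (m ! : ℝ) ^ 2) := by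
  induction m with
  | zero => simp
  | succ k ih =>
    rw [show 2 * (k + 1) = 2 * k + 2 by ring, integral_sin_pow, ih, sin_zero, sin_pi,
      zero_pow (by omega), Nat.factorial_succ, show 2 * k + 2 = (2 * k + 1) + 1 by ring,
      Nat.factorial_succ, Nat.factorial_succ]
    push_cast
    field_simp
    ring

theorem integral_cos_two_mul_mul_sin_pow_two_mul (m : ℕ) :
    ∫ θ in (0:ℝ)..π, cos (2 * θ) * sin θ ^ (2 * m)
      = -(m / (m + 1)) * ∫ θ in (0:ℝ)..π, sin θ ^ (2 * m) := by
  have hcos (θ : ℝ) :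
      cos (2 * θ) * sin θ ^ (2 * m) = sin θ ^ (2 * m) - 2 * sin θ ^ (2 * m + 2) := by
    rw [cos_two_mul', cos_sq']
    ring
  simp_rw [hcos]
  rw [intervalIntegral.integral_sub (by apply Continuous.intervalIntegrable; fun_prop)
      (by apply Continuous.intervalIntegrable; fun_prop),
    intervalIntegral.integral_const_mul, integral_sin_pow, sin_zero, sin_pi, zero_pow (by omega)]
  push_cast
  field_simp
  ring

theorem integral_sin_two_mul_mul_sin_mul_sin (x : ℝ) :
    ∫ θ in (0:ℝ)..π, sin (2 * θ) * sin (x * sin θ) = 0 := by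
  have hodd (θ : ℝ) :
      sin (2 * (π - θ)) * sin (x * sin (π - θ)) = -(sin (2 * θ) * sin (x * sin θ)) := by
    rw [sin_pi_sub, mul_sub, sin_sub, sin_two_pi, cos_two_pi]
    ring
  have h := intervalIntegral.integral_comp_sub_left
    (fun θ => sin (2 * θ) * sin (x * sin θ)) (a := 0) (b := π) π
  simp only [hodd, sub_zero, sub_self, intervalIntegral.integral_neg] at h
  linarith

theorem besselJ_two_eq_integral_cos_mul_cos (x : ℝ) :
    besselJ 2 x = 1 / π * ∫ θ in (0:ℝ)..π, cos (2 * θ) * cos (x * sin θ) := by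
  have h : ∫ θ in (0:ℝ)..π, cos (2 * θ - x * sin θ)
      = (∫ θ in (0:ℝ)..π, cos (2 * θ) * cos (x * sin θ))
        + ∫ θ in (0:ℝ)..π, sin (2 * θ) * sin (x * sin θ) := by
    simp_rw [cos_sub]
    exact intervalIntegral.integral_add (by apply Continuous.intervalIntegrable; fun_prop)
      (by apply Continuous.intervalIntegrable; fun_prop)
  rw [besselJ, Nat.cast_ofNat, h, integral_sin_two_mul_mul_sin_mul_sin, add_zero]

theorem hasSum_integral_cos_two_mul_mul_cos_mul_sin (x : ℝ) :
    HasSum (fun m : ℕ => (-1) ^ m * x ^ (2 * m) / (2 * m)! *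
        ∫ θ in (0:ℝ)..π, cos (2 * θ) * sin θ ^ (2 * m))
      (∫ θ in (0:ℝ)..π, cos (2 * θ) * cos (x * sin θ)) := by
  simp_rw [← intervalIntegral.integral_const_mul]
  refine intervalIntegral.hasSum_integral_of_dominated_convergence
    (fun m _ => |x| ^ (2 * m) / (2 * m)!) (fun m => by fun_prop) (fun m => .of_forall fun θ _ => ?_)
    (.of_forall fun θ _ => (Real.summable_pow_div_factorial |x|).comp_injective
      (fun _ _ h => by simpa using h)) intervalIntegrable_const
    (.of_forall fun θ _ => ?_)
  · have hcs : ‖cos (2 * θ) * sin θ ^ (2 * m)‖ ≤ 1 := by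
      rw [norm_mul, norm_pow]
      exact mul_le_one₀ (abs_cos_le_one _) (by positivity)
        (pow_le_one₀ (norm_nonneg _) (abs_sin_le_one _))
    rw [norm_mul]
    refine (mul_le_of_le_one_right (norm_nonneg _) hcs).trans_eq ?_
    simp [norm_div, norm_mul, norm_pow]
  · exact ((Real.hasSum_cos (x * sin θ)).mul_left (cos (2 * θ))).congr_fun fun m => by ring

theorem hasSum_besselJ_two (x : ℝ) :
    HasSum (fun k : ℕ => (-1) ^ k * (x / 2) ^ (2 * k + 2) / (k ! * (k + 2)! : ℝ))
      (besselJ 2 x) := by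
  have h := (hasSum_integral_cos_two_mul_mul_cos_mul_sin x).mul_left (1 / π)
  rw [← besselJ_two_eq_integral_cos_mul_cos, ← hasSum_nat_add_iff' 1] at h
  simp only [integral_cos_two_mul_mul_sin_pow_two_mul, integral_sin_pow_two_mul,
    Finset.sum_range_one, CharP.cast_eq_zero, zero_div, neg_zero, zero_mul, mul_zero,
    sub_zero] at h
  refine h.congr_fun fun k => ?_
  have h4 : (4 : ℝ) ^ (k + 1) = 2 ^ (2 * k + 2) := by
    rw [show (4 : ℝ) = 2 ^ 2 by norm_num, ← pow_mul, mul_add_one]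
  rw [h4, show 2 * (k + 1) = 2 * k + 2 by ring, div_pow, Nat.factorial_succ (k + 1),
    Nat.factorial_succ k]
  push_cast
  field_simp
  ring

theorem integral_pow_mul_exp_neg_mul (n : ℕ) {r : ℝ} (hr : 0 < r) :
    ∫ t in Ioi 0, t ^ n * exp (-(r * t)) = n ! / r ^ (n + 1) := by
  have h := integral_rpow_mul_exp_neg_mul_Ioi (a := n + 1) (by positivity) hr
  simp only [add_sub_cancel_right, rpow_natCast, Gamma_nat_eq_factorial] at h
  rw [← Nat.cast_add_one, rpow_natCast] at h
  rw [h, one_div_pow, one_div_mul_eq_div]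

theorem integrableOn_pow_mul_exp_neg_mul (n : ℕ) {r : ℝ} (hr : 0 < r) :
    IntegrableOn (fun t => t ^ n * exp (-(r * t))) (Ioi 0) :=
  Integrable.of_integral_ne_zero <| by rw [integral_pow_mul_exp_neg_mul n hr]; positivity

theorem integral_pow_mul_exp_neg_mul_sq (n : ℕ) {s : ℝ} (hs : 0 < s) :
    ∫ R in Ioi 0, R ^ (2 * n + 1) * exp (-(s * R ^ 2)) = n ! / (2 * s ^ (n + 1)) := by
  have h := integral_rpow_mul_exp_neg_mul_rpow (q := ((2 * n + 1 : ℕ) : ℝ)) two_pos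
    (neg_one_lt_zero.trans_le (Nat.cast_nonneg _)) hs
  rw [neg_div, show ((((2 * n + 1 : ℕ) : ℝ)) + 1) / 2 = ((n + 1 : ℕ) : ℝ) by push_cast; ring,
    rpow_neg hs.le, rpow_natCast, Nat.cast_add_one n, Gamma_nat_eq_factorial] at h
  simp only [rpow_natCast, rpow_two, neg_mul] at h
  rw [h]
  field_simp

theorem integrableOn_pow_mul_exp_neg_mul_sq (n : ℕ) {s : ℝ} (hs : 0 < s) :
    IntegrableOn (fun R => R ^ (2 * n + 1) * exp (-(s * R ^ 2))) (Ioi 0) :=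
  Integrable.of_integral_ne_zero <| by rw [integral_pow_mul_exp_neg_mul_sq n hs]; positivity

theorem Real.hasSum_exp (x : ℝ) : HasSum (fun n : ℕ => x ^ n / n !) (exp x) := by
  simpa [exp_eq_exp_ℝ] using NormedSpace.expSeries_div_hasSum_exp x

theorem integral_pow_three_mul_exp_neg_mul_sq_mul_besselJ_two {s : ℝ} (hs : 0 < s) (a : ℝ) :
    ∫ R in Ioi 0, R ^ 3 * exp (-(s * R ^ 2)) * besselJ 2 (a * R)
      = a ^ 2 / (8 * s ^ 3) * exp (-(a ^ 2 / (4 * s))) := by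
  set c : ℕ → ℝ := fun k => (-1) ^ k * (a / 2) ^ (2 * k + 2) / (k ! * (k + 2)! : ℝ)
  set G : ℕ → ℝ → ℝ := fun k R => c k * (R ^ (2 * (k + 2) + 1) * exp (-(s * R ^ 2)))
  have hG (k : ℕ) :
      ∫ R in Ioi 0, G k R = a ^ 2 / (8 * s ^ 3) * ((-(a ^ 2 / (4 * s))) ^ k / k !) := by
    rw [integral_const_mul, integral_pow_mul_exp_neg_mul_sq _ hs]
    have h4 : (2 : ℝ) ^ (2 * k + 2) = 4 ^ (k + 1) := by
      rw [show (4 : ℝ) = 2 ^ 2 by norm_num, ← pow_mul, mul_add_one]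
    simp only [c, div_pow, h4, neg_pow (a ^ 2 / (4 * s))]
    field_simp
    ring
  have hG_int (k : ℕ) : Integrable (G k) (volume.restrict (Ioi 0)) :=
    (integrableOn_pow_mul_exp_neg_mul_sq _ hs).const_mul _
  have hG_norm (k : ℕ) : ∫ R in Ioi 0, ‖G k R‖ = |∫ R in Ioi 0, G k R| := by
    have hR (R : ℝ) (hR : R ∈ Ioi 0) : 0 ≤ R ^ (2 * (k + 2) + 1) * exp (-(s * R ^ 2)) := by
      have := hR.out
      positivity
    rw [setIntegral_congr_fun measurableSet_Ioi fun R hR' => by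
        rw [norm_mul, Real.norm_eq_abs, Real.norm_of_nonneg (hR R hR')],
      integral_const_mul, integral_const_mul, abs_mul,
      abs_of_nonneg (setIntegral_nonneg measurableSet_Ioi hR)]
  have hsum := hasSum_integral_of_summable_integral_norm hG_int <| by
    simp_rw [hG_norm, hG]
    exact ((Real.hasSum_exp _).summable.mul_left _).abs
  have hJ (R : ℝ) : ∑' k, G k R = R ^ 3 * exp (-(s * R ^ 2)) * besselJ 2 (a * R) :=
    (((hasSum_besselJ_two (a * R)).mul_left (R ^ 3 * exp (-(s * R ^ 2)))).congr_fun
      fun k => by simp only [G, c]; ring).tsum_eq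
  simp_rw [hJ, hG] at hsum
  exact hsum.unique ((Real.hasSum_exp _).mul_left _)

theorem integrableOn_pow_three_div_one_add_sq_pow_four :
    IntegrableOn (fun R : ℝ => R ^ 3 / (1 + R ^ 2) ^ 4) (Ioi 0) := by
  refine integrable_inv_one_add_sq.integrableOn.mono'
    (Continuous.aestronglyMeasurable (by fun_prop (disch := intro; positivity))) ?_
  filter_upwards [ae_restrict_mem measurableSet_Ioi] with R hR
  have hR : 0 < R := hR
  have h3 : R ^ 3 ≤ (1 + R ^ 2) ^ 3 := pow_le_pow_left₀ hR.le (by nlinarith) 3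
  calc ‖R ^ 3 / (1 + R ^ 2) ^ 4‖ = R ^ 3 / (1 + R ^ 2) ^ 4 :=
        Real.norm_of_nonneg (by positivity)
    _ ≤ (1 + R ^ 2) ^ 3 / (1 + R ^ 2) ^ 4 := by gcongr
    _ = (1 + R ^ 2)⁻¹ := by field_simp

theorem integral_pow_three_mul_div_one_add_sq_pow_four {f : ℝ → ℝ} (hf : Continuous f) {C : ℝ}
    (hC : ∀ R, |f R| ≤ C) :
    ∫ R in Ioi 0, R ^ 3 * f R / (1 + R ^ 2) ^ 4
      = 1 / 6 * ∫ s in Ioi 0,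
          s ^ 3 * exp (-s) * ∫ R in Ioi 0, R ^ 3 * exp (-(s * R ^ 2)) * f R := by
  set g : ℝ → ℝ → ℝ := fun R s => R ^ 3 * f R * (s ^ 3 * exp (-((1 + R ^ 2) * s)))
  have hg_sec (R : ℝ) : Integrable (g R) (volume.restrict (Ioi 0)) :=
    (integrableOn_pow_mul_exp_neg_mul 3 (by positivity)).const_mul _
  have hg_int (R : ℝ) : ∫ s in Ioi 0, g R s = 6 * (R ^ 3 * f R / (1 + R ^ 2) ^ 4) := by
    rw [integral_const_mul, integral_pow_mul_exp_neg_mul 3 (by positivity)]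
    norm_num [Nat.factorial]
    field_simp
  have hg_norm (R : ℝ) : ∫ s in Ioi 0, ‖g R s‖ = 6 * (|R ^ 3 * f R| / (1 + R ^ 2) ^ 4) := by
    have hs (s : ℝ) (hs : s ∈ Ioi 0) : 0 ≤ s ^ 3 * exp (-((1 + R ^ 2) * s)) := by
      have := hs.out
      positivity
    rw [setIntegral_congr_fun measurableSet_Ioi fun s hs' => by
        rw [norm_mul, Real.norm_eq_abs, Real.norm_of_nonneg (hs s hs')],
      integral_const_mul, integral_pow_mul_exp_neg_mul 3 (by positivity)]
    norm_num [Nat.factorial]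
    field_simp
  have hg : Integrable (Function.uncurry g)
      ((volume.restrict (Ioi 0)).prod (volume.restrict (Ioi 0))) := by
    rw [integrable_prod_iff (by fun_prop : Continuous (Function.uncurry g)).aestronglyMeasurable]
    refine ⟨.of_forall hg_sec, ?_⟩
    simp only [Function.uncurry_apply_pair, hg_norm]
    refine (integrableOn_pow_three_div_one_add_sq_pow_four.const_mul (6 * C)).mono'
      (Continuous.aestronglyMeasurable (by fun_prop (disch := intro; positivity))) ?_
    filter_upwards [ae_restrict_mem measurableSet_Ioi] with R hR
    have hR : 0 < R := hR
    rw [Real.norm_of_nonneg (by positivity), abs_mul, abs_of_pos (pow_pos hR 3)]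
    calc 6 * (R ^ 3 * |f R| / (1 + R ^ 2) ^ 4) ≤ 6 * (R ^ 3 * C / (1 + R ^ 2) ^ 4) := by
          gcongr
          exact hC R
      _ = 6 * C * (R ^ 3 / (1 + R ^ 2) ^ 4) := by ring
  have hg_swap (s : ℝ) : ∫ R in Ioi 0, g R s
      = s ^ 3 * exp (-s) * ∫ R in Ioi 0, R ^ 3 * exp (-(s * R ^ 2)) * f R := by
    rw [← integral_const_mul]
    congr 1 with R
    simp only [g]
    rw [show -((1 + R ^ 2) * s) = -s + -(s * R ^ 2) by ring, exp_add]
    ring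
  calc ∫ R in Ioi 0, R ^ 3 * f R / (1 + R ^ 2) ^ 4
      = 1 / 6 * ∫ R in Ioi 0, ∫ s in Ioi 0, g R s := by
        simp_rw [hg_int, integral_const_mul]
        ring
    _ = _ := by simp_rw [integral_integral_swap hg, hg_swap]

theorem integrableOn_exp_neg_sub_div {c : ℝ} (hc : 0 ≤ c) :
    IntegrableOn (fun s => exp (-s - c / s)) (Ioi 0) := by
  refine (exp_neg_integrableOn_Ioi 0 one_pos).mono'
    (by fun_prop : Measurable fun s : ℝ => exp (-s - c / s)).aestronglyMeasurable ?_
  filter_upwards [ae_restrict_mem measurableSet_Ioi] with s hs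
  have := div_nonneg hc (le_of_lt hs)
  rw [Real.norm_of_nonneg (exp_pos _).le, exp_le_exp]
  linarith

theorem integral_exp_mul_eq_integral_cosh_mul {h : ℝ → ℝ} (heven : ∀ t, h (-t) = h t)
    (hint : Integrable fun t => exp t * h t) :
    ∫ t, exp t * h t = ∫ t, cosh t * h t := by
  have hint' : Integrable fun t => exp (-t) * h t := by
    simpa only [heven] using hint.comp_neg
  have hneg : ∫ t, exp (-t) * h t = ∫ t, exp t * h t := by
    simpa only [heven] using integral_neg_eq_self (fun t => exp t * h t) volume
  calc ∫ t, exp t * h t = ((∫ t, exp t * h t) + ∫ t, exp (-t) * h t) / 2 := by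
        rw [hneg]
        ring
    _ = ∫ t, cosh t * h t := by
        rw [← integral_add hint hint', ← integral_div]
        congr 1 with t
        rw [cosh_eq]
        ring

theorem integral_exp_neg_sub_sq_div_eq_mul_besselK1 {a : ℝ} (ha : 0 < a) :
    ∫ s in Ioi 0, exp (-s - a ^ 2 / (4 * s)) = a * besselK1 a := by
  set F : ℝ → ℝ := fun s => exp (-s - a ^ 2 / (4 * s))
  set ψ : ℝ → ℝ := fun t => a / 2 * exp t
  have hψ : ψ '' univ = Ioi 0 := by
    ext y
    refine ⟨by rintro ⟨t, -, rfl⟩; exact mul_pos (by positivity) (exp_pos t), fun hy => ?_⟩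
    refine ⟨log (2 * y / a), trivial, ?_⟩
    have hy : 0 < y := hy
    simp only [ψ]
    rw [exp_log (by positivity)]
    field_simp
  have hψ' (t : ℝ) (_ : t ∈ univ) : HasDerivWithinAt ψ (ψ t) univ t :=
    ((hasDerivAt_exp t).const_mul _).hasDerivWithinAt
  have hinj : InjOn ψ univ := fun t _ u _ htu =>
    exp_injective (mul_left_cancel₀ (by positivity) htu)
  have hFψ (t : ℝ) : |ψ t| • F (ψ t) = a / 2 * (exp t * exp (-a * cosh t)) := by
    have hexp : -(a / 2 * exp t) - a ^ 2 / (4 * (a / 2 * exp t)) = -a * cosh t := by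
      rw [cosh_eq, exp_neg]
      field_simp
      ring
    simp only [ψ, F, smul_eq_mul, abs_of_pos (mul_pos (half_pos ha) (exp_pos t)), hexp,
      mul_assoc]
  have hint : Integrable fun t => exp t * exp (-a * cosh t) := by
    have hF : IntegrableOn F (ψ '' univ) := by
      rw [hψ]
      refine (integrableOn_exp_neg_sub_div (c := a ^ 2 / 4) (by positivity)).congr_fun
        (fun s _ => by simp only [F, div_div]) measurableSet_Ioi
    have h :=
      (integrableOn_image_iff_integrableOn_abs_deriv_smul MeasurableSet.univ hψ' hinj F).mp hF
    simp only [hFψ, integrableOn_univ] at h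
    exact (integrable_const_mul_iff (IsUnit.mk0 _ (by positivity)) _).mp h
  calc ∫ s in Ioi 0, F s = ∫ t, |ψ t| • F (ψ t) := by
        rw [← hψ, integral_image_eq_integral_abs_deriv_smul MeasurableSet.univ hψ' hinj,
          Measure.restrict_univ]
    _ = a / 2 * ∫ t, cosh t * exp (-a * cosh t) := by
        simp_rw [hFψ]
        rw [integral_const_mul,
          integral_exp_mul_eq_integral_cosh_mul (fun t => by rw [cosh_neg]) hint]
    _ = a * besselK1 a := by
        have h := integral_comp_abs (f := fun t => exp (-a * cosh t) * cosh t)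
        simp only [cosh_abs] at h
        simp_rw [mul_comm (cosh _)]
        rw [h, besselK1]
        ring

theorem hankel_transform_identity (lam ξ : ℝ) (hlam : 0 < lam) (hξ : 0 < ξ) :
    (24 / lam^2) * ∫ R in Set.Ioi (0:ℝ), R^3 * besselJ 2 (ξ * R * lam) / (1 + R^2)^4
      = (ξ^3 * lam / 2) * besselK1 (ξ * lam) := by
  set a := ξ * lam
  have ha : 0 < a := mul_pos hξ hlam
  have harg (R : ℝ) : ξ * R * lam = a * R := by ring
  have hweber (s : ℝ) (hs : s ∈ Ioi 0) :
      s ^ 3 * exp (-s) * ∫ R in Ioi 0, R ^ 3 * exp (-(s * R ^ 2)) * besselJ 2 (a * R)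
        = a ^ 2 / 8 * exp (-s - a ^ 2 / (4 * s)) := by
    have hs : 0 < s := hs
    rw [integral_pow_three_mul_exp_neg_mul_sq_mul_besselJ_two hs, sub_eq_add_neg, exp_add]
    field_simp
  simp_rw [harg]
  rw [integral_pow_three_mul_div_one_add_sq_pow_four (f := fun R => besselJ 2 (a * R))
      ((continuous_besselJ 2).comp (continuous_const_mul a)) (fun R => abs_besselJ_le_one 2 _),
    setIntegral_congr_fun measurableSet_Ioi hweber, integral_const_mul,
    integral_exp_neg_sub_sq_div_eq_mul_besselK1 ha]
  field_simp
  ring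
end

section
/- For all real r, ρ > 0 with r ≠ ρ: ∫₀^π sin⁴(φ)/(ρ² + r² + 2rρcos(φ)) dφ = -π(min{r,ρ}² - 3max{r,ρ}²)/(8 max{r,ρ}⁴). -/
/-!
Dividing `sin⁴ φ = (1 - cos² φ)²` by `a + b cos φ` as polynomials in `cos φ` leaves a cubic in
`cos φ`, whose integral over `[0, π]` is elementary, and the constant remainder `(a² - b²)² / b⁴`,
which multiplies `∫₀^π dφ / (a + b cos φ) = π / √(a² - b²)`. For `a = r² + ρ²`, `b = 2 r ρ` the
square root is `max² - min²`.
-/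

open Real intervalIntegral

section
variable {a b : ℝ}

lemma sq_sub_sq_pos_of_abs_lt (hab : |b| < a) : 0 < a ^ 2 - b ^ 2 :=
  sub_pos.mpr (sq_lt_sq.mpr (hab.trans_le (le_abs_self a)))

lemma add_mul_cos_pos (hab : |b| < a) (x : ℝ) : 0 < a + b * cos x := by
  have : |b * cos x| ≤ |b| := by
    rw [abs_mul]; exact mul_le_of_le_one_right (abs_nonneg b) (abs_cos_le_one x)
  linarith [neg_abs_le (b * cos x)]

/-- A primitive of `√(a² - b²) / (a + b cos φ)` that, unlike the textbook
`2 arctan (√((a - b)/(a + b)) tan (φ/2))`, is smooth on all of `ℝ`. -/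
lemma hasDerivAt_sub_two_mul_arctan (hab : |b| < a) (x : ℝ) :
    HasDerivAt (fun φ => φ - 2 * arctan (b * sin φ / (a + √(a ^ 2 - b ^ 2) + b * cos φ)))
      (√(a ^ 2 - b ^ 2) / (a + b * cos x)) x := by
  set s := √(a ^ 2 - b ^ 2)
  have hs2 : s ^ 2 = a ^ 2 - b ^ 2 := sq_sqrt (sq_sub_sq_pos_of_abs_lt hab).le
  have hd1 := add_mul_cos_pos hab x
  have hd2 : 0 < a + s + b * cos x := by linarith [sqrt_nonneg (a ^ 2 - b ^ 2)]
  have has : a + s ≠ 0 := by linarith [abs_nonneg b, sqrt_nonneg (a ^ 2 - b ^ 2)]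
  have hsc := sin_sq_add_cos_sq x
  have hq := ((hasDerivAt_sin x).const_mul b).div
    (((hasDerivAt_cos x).const_mul b).const_add (a + s)) hd2.ne'
  refine ((hasDerivAt_id x).sub (hq.arctan.const_mul 2)).congr_deriv ?_
  have hsum : (a + s + b * cos x) ^ 2 + (b * sin x) ^ 2 = 2 * (a + s) * (a + b * cos x) := by
    linear_combination b ^ 2 * hsc + hs2
  simp only [Pi.div_apply, div_pow]
  rw [one_add_div (by positivity), hsum]
  field_simp
  linear_combination -b ^ 2 * hsc - hs2

theorem integral_inv_add_mul_cos (hab : |b| < a) :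
    ∫ φ in (0)..π, (a + b * cos φ)⁻¹ = π / √(a ^ 2 - b ^ 2) := by
  have hs : 0 < √(a ^ 2 - b ^ 2) := sqrt_pos.mpr (sq_sub_sq_pos_of_abs_lt hab)
  have hpos := add_mul_cos_pos hab
  have hcont : Continuous fun φ => √(a ^ 2 - b ^ 2) / (a + b * cos φ) :=
    continuous_const.div (by fun_prop) fun φ => (hpos φ).ne'
  have h := integral_eq_sub_of_hasDerivAt (fun x _ => hasDerivAt_sub_two_mul_arctan hab x)
    (hcont.intervalIntegrable 0 π)
  simp only [div_eq_mul_inv, integral_const_mul, sin_pi, sin_zero, mul_zero, zero_mul,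
    arctan_zero, sub_zero] at h
  rw [eq_div_iff hs.ne', mul_comm, h]

lemma sin_pow_four_div_add_mul_cos (hb : b ≠ 0) {x : ℝ} (hx : a + b * cos x ≠ 0) :
    sin x ^ 4 / (a + b * cos x) =
      cos x ^ 3 / b - a / b ^ 2 * cos x ^ 2 + (a ^ 2 / b ^ 3 - 2 / b) * cos x
        + (2 * a / b ^ 2 - a ^ 3 / b ^ 4) + (a ^ 2 - b ^ 2) ^ 2 / b ^ 4 * (a + b * cos x)⁻¹ := by
  rw [show sin x ^ 4 = (1 - cos x ^ 2) ^ 2 by rw [← sin_sq]; ring, div_eq_iff hx]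
  field_simp
  linear_combination (-(a ^ 2 - b ^ 2) ^ 2) * inv_mul_cancel₀ hx

theorem integral_sin_pow_four_div_add_mul_cos (hb : b ≠ 0) (hab : |b| < a) :
    ∫ φ in (0)..π, sin φ ^ 4 / (a + b * cos φ) =
      π * (3 * a / (2 * b ^ 2) - a ^ 3 / b ^ 4 + √(a ^ 2 - b ^ 2) ^ 3 / b ^ 4) := by
  have hpos := add_mul_cos_pos hab
  rw [integral_congr fun x _ => sin_pow_four_div_add_mul_cos hb (hpos x).ne',
    integral_add, integral_add, integral_add, integral_sub]
  · simp only [integral_div, integral_const_mul, integral_const, integral_cos_pow_three,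
      integral_cos_sq, integral_cos, integral_inv_add_mul_cos hab, smul_eq_mul, sin_pi, sin_zero,
      cos_pi, cos_zero]
    have hd := sq_sub_sq_pos_of_abs_lt hab
    have hs2 : √(a ^ 2 - b ^ 2) ^ 2 = a ^ 2 - b ^ 2 := sq_sqrt hd.le
    have hs : √(a ^ 2 - b ^ 2) ≠ 0 := (sqrt_pos.mpr hd).ne'
    generalize √(a ^ 2 - b ^ 2) = s at *
    rw [← hs2]
    field_simp
    ring
  all_goals
    exact Continuous.intervalIntegrable (by fun_prop (disch := exact fun x => (hpos x).ne')) _ _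

end

theorem integral_sin_pow_four_div_sq_add_sq_add_mul_cos {m M : ℝ} (hm : 0 < m) (hmM : m < M) :
    ∫ φ in (0)..π, sin φ ^ 4 / (M ^ 2 + m ^ 2 + 2 * M * m * cos φ) =
      π * (3 * M ^ 2 - m ^ 2) / (8 * M ^ 4) := by
  have hM : 0 < M := hm.trans hmM
  have hab : |2 * M * m| < M ^ 2 + m ^ 2 := by
    rw [abs_of_pos (by positivity)]
    nlinarith
  rw [integral_sin_pow_four_div_add_mul_cos (by positivity) hab,
    show (M ^ 2 + m ^ 2) ^ 2 - (2 * M * m) ^ 2 = (M ^ 2 - m ^ 2) ^ 2 by ring,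
    sqrt_sq (by nlinarith)]
  field_simp
  ring

theorem sin_pow_four_residue_integral (r ρ : ℝ) (hr : 0 < r) (hρ : 0 < ρ) (hne : r ≠ ρ) :
    ∫ φ in (0:ℝ)..Real.pi, (Real.sin φ)^4 / (ρ^2 + r^2 + 2*r*ρ*Real.cos φ)
      = -Real.pi * ((min r ρ)^2 - 3 * (max r ρ)^2) / (8 * (max r ρ)^4) := by
  have hden : ∀ φ, ρ ^ 2 + r ^ 2 + 2 * r * ρ * cos φ =
      max r ρ ^ 2 + min r ρ ^ 2 + 2 * max r ρ * min r ρ * cos φ := by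
    intro φ
    rcases le_total r ρ with h | h
    · rw [max_eq_right h, min_eq_left h]; ring
    · rw [max_eq_left h, min_eq_right h]; ring
  simp_rw [hden,
    integral_sin_pow_four_div_sq_add_sq_add_mul_cos (lt_min hr hρ) (min_lt_max.mpr hne)]
  ring
end

section
/- Let L*(g)(r) = g'(r) + V(r)g(r) with V(r) = (2/r)·(1-r²)/(1+r²) + 1/r. If g ∈ C¹([0,∞)) ∩ L²((0,∞), r dr) with L*g ∈ L²((0,∞), r dr), g(0) = 0 and lim_{r→∞} g(r) = 0, then ‖L*g‖²_{L²(rdr)} = ∫₀^∞ (g'(r)² + g(r)²·(9 + 2r² + r⁴)/(r + r³)²) r dr; in particular ‖g‖_{Ḣ¹ₑ} ≤ C‖L*g‖_{L²(rdr)}. -/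
/-!
Since `r V(r) = W(r) := (3 - r²)/(1 + r²)` and `W' = W²/r - (9 + 2r² + r⁴)/(r(1 + r²)²)`,
expanding `(g' + V g)² r` gives the claimed integrand plus the exact derivative `(W g²)'`.
The boundary terms `W g²` vanish at `0` because `g 0 = 0` and at `∞` because `W` is bounded.
Finally `(9 + 2r² + r⁴)/(r + r³)² ≥ 1/r²` gives the bound with `C = 1`.
-/

open MeasureTheory Set Filter

noncomputable def V (r : ℝ) : ℝ := (2/r) * ((1 - r^2) / (1 + r^2)) + 1/r

noncomputable def Lstar (g : ℝ → ℝ) (r : ℝ) : ℝ := deriv g r + V r * g r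

theorem integral_Ioi_eq_of_hasDerivAt_sub_of_nonneg {f h F : ℝ → ℝ} {a m : ℝ}
    (hfi : IntegrableOn f (Ioi a)) (hfc : ContinuousOn f (Ioi a))
    (hFa : ContinuousWithinAt F (Ici a) a) (hF : ∀ x ∈ Ioi a, HasDerivAt F (f x - h x) x)
    (hFtop : Tendsto F atTop (nhds m)) (hh : ∀ x ∈ Ioi a, 0 ≤ h x) :
    IntegrableOn h (Ioi a) ∧ ∫ x in Ioi a, h x = (∫ x in Ioi a, f x) - m + F a := by
  -- `h ≥ 0` is the derivative of `G b = ∫ x in a..b, f x - F b`, which has limits at both ends,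
  -- so `h` is integrable without any a priori bound.
  set G : ℝ → ℝ := fun b => (∫ x in a..b, f x) - F b
  have hfab : ∀ b, a ≤ b → IntervalIntegrable f volume a b := fun b hab =>
    (intervalIntegrable_iff_integrableOn_Ioc_of_le hab).2 (hfi.mono_set Ioc_subset_Ioi_self)
  have hGa : ContinuousWithinAt G (Ici a) a := by
    have hprim := intervalIntegral.continuousOn_primitive_interval'
      (hfab (a + 1) (by linarith)) left_mem_uIcc
    rw [uIcc_of_le (by linarith)] at hprim
    refine ContinuousWithinAt.sub ?_ hFa
    exact (hprim a (left_mem_Icc.2 (by linarith))).mono_of_mem_nhdsWithin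
      (Icc_mem_nhdsGE (by linarith))
  have hG : ∀ x ∈ Ioi a, HasDerivAt G (h x) x := fun x hx => by
    have hfx : ContinuousAt f x := hfc.continuousAt (Ioi_mem_nhds hx)
    have hprim := intervalIntegral.integral_hasDerivAt_right (hfab x (le_of_lt hx))
      (hfc.stronglyMeasurableAtFilter isOpen_Ioi x hx) hfx
    exact (hprim.fun_sub (hF x hx)).congr_deriv (sub_sub_cancel _ _)
  have hGtop : Tendsto G atTop (nhds ((∫ x in Ioi a, f x) - m)) :=
    (intervalIntegral_tendsto_integral_Ioi a hfi tendsto_id).sub hFtop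
  have hhi : IntegrableOn h (Ioi a) := integrableOn_Ioi_deriv_of_nonneg hGa hG hh hGtop
  refine ⟨hhi, ?_⟩
  rw [integral_Ioi_of_hasDerivAt_of_tendsto hGa hG hhi hGtop]
  simp [G]

/-- Equal to `r * V r` for `r ≠ 0`, but smooth at `0`. -/
noncomputable def rV (r : ℝ) : ℝ := (3 - r^2) / (1 + r^2)

theorem hasDerivAt_rV (r : ℝ) : HasDerivAt rV (-8 * r / (1 + r^2)^2) r := by
  have hnum : HasDerivAt (fun r : ℝ => 3 - r^2) (-(2 * r)) r := by
    simpa using (hasDerivAt_pow 2 r).const_sub 3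
  have hden : HasDerivAt (fun r : ℝ => 1 + r^2) (2 * r) r := by
    simpa using (hasDerivAt_pow 2 r).const_add 1
  refine (hnum.div hden (by positivity)).congr_deriv ?_
  field_simp
  ring

theorem abs_rV_le (r : ℝ) : |rV r| ≤ 3 := by
  have hden : (0 : ℝ) < 1 + r^2 := by positivity
  rw [rV, abs_div, abs_of_pos hden, div_le_iff₀ hden, abs_le]
  constructor <;> nlinarith

theorem tendsto_rV_mul_sq_atTop {g : ℝ → ℝ} (hg : Tendsto g atTop (nhds 0)) :
    Tendsto (fun x => rV x * g x ^ 2) atTop (nhds 0) := by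
  refine bdd_le_mul_tendsto_zero (b := -3) (B := 3) ?_ ?_ (by simpa using hg.pow 2) <;>
    filter_upwards with x <;> linarith [abs_le.1 (abs_rV_le x)]

theorem continuousOn_V : ContinuousOn V (Ioi 0) := by
  intro x hx
  have hx0 : x ≠ 0 := ne_of_gt hx
  apply ContinuousAt.continuousWithinAt
  unfold V
  fun_prop (disch := first | exact hx0 | positivity)

noncomputable def expandedDensity (g : ℝ → ℝ) (r : ℝ) : ℝ :=
  ((deriv g r)^2 + (g r)^2 * (9 + 2*r^2 + r^4) / (r + r^3)^2) * r

theorem Lstar_sq_mul_sub_expandedDensity {g : ℝ → ℝ} {r : ℝ} (hr : 0 < r) :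
    (Lstar g r)^2 * r - expandedDensity g r
      = -8 * r / (1 + r^2)^2 * g r ^ 2 + rV r * (2 * g r * deriv g r) := by
  simp only [expandedDensity, Lstar, V, rV]
  field_simp
  ring

theorem hasDerivAt_rV_mul_sq {g : ℝ → ℝ} {r : ℝ} (hg : DifferentiableAt ℝ g r) (hr : 0 < r) :
    HasDerivAt (fun x => rV x * g x ^ 2) ((Lstar g r)^2 * r - expandedDensity g r) r := by
  rw [Lstar_sq_mul_sub_expandedDensity hr]
  refine (hasDerivAt_rV r).mul ?_
  exact (hg.hasDerivAt.fun_pow 2).congr_deriv (by ring)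

theorem expandedDensity_nonneg (g : ℝ → ℝ) {r : ℝ} (hr : 0 < r) : 0 ≤ expandedDensity g r := by
  unfold expandedDensity
  positivity

theorem sq_div_sq_le_expandedDensity (g : ℝ → ℝ) {r : ℝ} (hr : 0 < r) :
    ((deriv g r)^2 + (g r)^2 / r^2) * r ≤ expandedDensity g r := by
  unfold expandedDensity
  gcongr ((deriv g r)^2 + ?_) * r
  rw [div_le_div_iff₀ (by positivity) (by positivity)]
  nlinarith [sq_nonneg (g r), sq_nonneg r, mul_pos hr hr]

theorem continuousOn_Lstar {g : ℝ → ℝ} (hgc : ContinuousOn g (Ioi 0))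
    (hdc : ContinuousOn (deriv g) (Ioi 0)) : ContinuousOn (Lstar g) (Ioi 0) :=
  hdc.add (continuousOn_V.mul hgc)

theorem Lstar_norm_identity :
    ∃ C > 0, ∀ g : ℝ → ℝ,
      (∀ x : ℝ, 0 ≤ x → DifferentiableAt ℝ g x) →
      ContinuousOn (deriv g) (Set.Ici 0) →
      MeasureTheory.IntegrableOn (fun r => (g r)^2 * r) (Set.Ioi 0) →
      MeasureTheory.IntegrableOn (fun r => (Lstar g r)^2 * r) (Set.Ioi 0) →
      g 0 = 0 →
      Filter.Tendsto g Filter.atTop (nhds 0) →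
      (∫ r in Set.Ioi (0:ℝ), (Lstar g r)^2 * r
          = ∫ r in Set.Ioi (0:ℝ),
              ((deriv g r)^2 + (g r)^2 * (9 + 2*r^2 + r^4) / (r + r^3)^2) * r)
      ∧ ∫ r in Set.Ioi (0:ℝ), ((deriv g r)^2 + (g r)^2 / r^2) * r
          ≤ C * ∫ r in Set.Ioi (0:ℝ), (Lstar g r)^2 * r := by
  refine ⟨1, one_pos, fun g hdiff hdc _ hLi hg0 hgtop => ?_⟩
  have hgc : ContinuousOn g (Ioi 0) := fun x hx =>
    (hdiff x (le_of_lt hx)).continuousAt.continuousWithinAt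
  have hFa : ContinuousWithinAt (fun x => rV x * g x ^ 2) (Ici 0) 0 :=
    ((hasDerivAt_rV 0).continuousAt.mul ((hdiff 0 le_rfl).continuousAt.pow 2)).continuousWithinAt
  obtain ⟨hEi, hE⟩ := integral_Ioi_eq_of_hasDerivAt_sub_of_nonneg hLi
    (((continuousOn_Lstar hgc (hdc.mono Ioi_subset_Ici_self)).pow 2).mul continuousOn_id) hFa
    (fun x hx => hasDerivAt_rV_mul_sq (hdiff x (le_of_lt hx)) hx)
    (tendsto_rV_mul_sq_atTop hgtop) (fun x hx => expandedDensity_nonneg g hx)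
  replace hE : ∫ r in Ioi (0:ℝ), (Lstar g r)^2 * r = ∫ r in Ioi (0:ℝ), expandedDensity g r := by
    simpa [hg0] using hE.symm
  refine ⟨hE, ?_⟩
  rw [one_mul, hE]
  refine integral_mono_of_nonneg (ae_restrict_of_forall_mem measurableSet_Ioi fun x hx => ?_) hEi
    (ae_restrict_of_forall_mem measurableSet_Ioi fun x hx => sq_div_sq_le_expandedDensity g hx)
  have hx : (0 : ℝ) < x := hx
  positivity
end

section
/- For all r, ρ > 0 and θ ∈ (0, 2π) with r² + ρ² + 2rρcos(θ) > 0: (ρ + r)(1 + cos θ) / ((r - ρ)² + 2rρ(1 + cos θ)) ≤ C / max{r, ρ} for an absolute constant C. -/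
/-!
Write `s = 1 + cos θ ∈ [0, 2]`. Since `(r - ρ)² + 2rρs - (s/2)(r + ρ)² = (1 - s/2)(r - ρ)² ≥ 0`,
the denominator is at least `(s/2)(r + ρ)²`, so the quotient is at most `2 / (r + ρ) ≤ 2 / max r ρ`.
-/

lemma half_mul_add_sq_le {a b s : ℝ} (hs : s ≤ 2) :
    s / 2 * (a + b) ^ 2 ≤ (a - b) ^ 2 + 2 * a * b * s := by
  nlinarith [mul_nonneg (sq_nonneg (a - b)) (sub_nonneg.2 hs)]

lemma add_mul_div_sq_add_le {a b s : ℝ} (hab : 0 < a + b) (hs₀ : 0 ≤ s) (hs : s ≤ 2) :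
    (a + b) * s / ((a - b) ^ 2 + 2 * a * b * s) ≤ 2 / (a + b) := by
  rcases hs₀.eq_or_lt with rfl | hs_pos
  · simp only [mul_zero, zero_div]
    positivity
  calc (a + b) * s / ((a - b) ^ 2 + 2 * a * b * s)
      ≤ (a + b) * s / (s / 2 * (a + b) ^ 2) :=
        div_le_div_of_nonneg_left (by positivity) (by positivity) (half_mul_add_sq_le hs)
    _ = 2 / (a + b) := by field_simp

theorem null_derivative_gain :
    ∃ C > 0, ∀ r ρ θ : ℝ, 0 < r → 0 < ρ → θ ∈ Set.Ioo 0 (2*Real.pi) →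
      (ρ + r) * (1 + Real.cos θ) / ((r - ρ)^2 + 2*r*ρ*(1 + Real.cos θ))
        ≤ C / max r ρ := by
  refine ⟨2, two_pos, fun r ρ θ hr hρ _ => ?_⟩
  have hs₀ : 0 ≤ 1 + Real.cos θ := by linarith [Real.neg_one_le_cos θ]
  have hs : 1 + Real.cos θ ≤ 2 := by linarith [Real.cos_le_one θ]
  have hmax_le : max r ρ ≤ r + ρ := max_le (by linarith) (by linarith)
  calc (ρ + r) * (1 + Real.cos θ) / ((r - ρ)^2 + 2*r*ρ*(1 + Real.cos θ))
      ≤ 2 / (r + ρ) := by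
        rw [add_comm ρ r]
        exact add_mul_div_sq_add_le (by positivity) hs₀ hs
    _ ≤ 2 / max r ρ :=
        div_le_div_of_nonneg_left zero_le_two (lt_max_of_lt_left hr) hmax_le
end
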